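/- arXiv:1605.01804 — 2 statements merged into one kernel-verified Lean document; each statement's English description precedes it below -/
import Mathlib

section
/- Let α > 0 and let t ↦ v(t) be a continuously differentiable map from an open interval I ⊆ ℝ into the Schwartz space 𝒮(ℝ²;ℂ). Set u(t) = B(|v(t)|²). Then for every t ∈ I, Re ∫_{ℝ²} u(t) v(t) ∂_t v̄(t) dx dy = (1/4) d/dt ∫_{ℝ²} u(t) |v(t)|² dx dy. -/
noncomputable section
open MeasureTheory Complex SchwartzMap FourierTransform Filter
open scoped ENNReal Topology

abbrev Plane : Type := EuclideanSpace ℝ (Fin 2)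

/-- Symbol of the Helmholtz inverse `B = (Id - α²Δ)⁻¹`. -/
def mB (α : ℝ) (ξ : Plane) : ℂ := ((1 + α ^ 2 * ‖ξ‖ ^ 2)⁻¹ : ℝ)

/-- The Fourier multiplier with symbol `m`, realized pointwise via the (inverse) Fourier
integral; this is well defined whenever `m ⬝ 𝓕 f ∈ L¹`. -/
def mult (m : Plane → ℂ) (f : Plane → ℂ) : Plane → ℂ :=
  𝓕⁻ (fun ξ => m ξ * 𝓕 f ξ : Plane → ℂ)

/-!
Write `p = |v|²` and `Φ(a, b) = ∫ (B a) b`, so that the energy is `Re Φ(p, p)`. Pointwise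
products are jointly continuous on Schwartz space, so the product rule applies and the derivative
is `Re (Φ(ṗ, p) + Φ(p, ṗ))` with `ṗ = v̇ · conj v + v · conj v̇`. Because the symbol
`(1 + α²|ξ|²)⁻¹` is real and even, `Φ` is symmetric and `B` commutes with complex conjugation,
so `B p` is real-valued; hence each of the four terms has real part `Re Φ(p, v · conj v̇)`.
-/

open scoped ComplexConjugate

section Slope

variable {E F G : Type*} [AddCommGroup E] [Module ℝ E] [TopologicalSpace E]
  [AddCommGroup F] [Module ℝ F] [TopologicalSpace F]
  [AddCommGroup G] [Module ℝ G] [TopologicalSpace G]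
  {x : ℝ → E} {y : ℝ → F} {t : ℝ} {x' : E} {y' : F}

theorem tendsto_comp_add_of_tendsto_slope [IsTopologicalAddGroup E] [ContinuousSMul ℝ E]
    (hx : Tendsto (fun h : ℝ => h⁻¹ • (x (t + h) - x t)) (𝓝[≠] 0) (𝓝 x')) :
    Tendsto (fun h => x (t + h)) (𝓝[≠] 0) (𝓝 (x t)) := by
  have hid : Tendsto (fun h : ℝ => h) (𝓝[≠] 0) (𝓝 0) := nhdsWithin_le_nhds
  have := tendsto_const_nhds (x := x t) |>.add (hid.smul hx)
  rw [zero_smul, add_zero] at this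
  refine this.congr' (eventually_nhdsWithin_of_forall fun h (hh : h ≠ 0) => ?_)
  simp [smul_smul, hh]

theorem ContinuousLinearMap.tendsto_slope_comp (L : E →L[ℝ] F)
    (hx : Tendsto (fun h : ℝ => h⁻¹ • (x (t + h) - x t)) (𝓝[≠] 0) (𝓝 x')) :
    Tendsto (fun h : ℝ => h⁻¹ • (L (x (t + h)) - L (x t))) (𝓝[≠] 0) (𝓝 (L x')) := by
  simpa only [Function.comp_def, map_sub, map_smul] using (L.continuous.tendsto x').comp hx

theorem tendsto_slope_bilinear [IsTopologicalAddGroup F] [ContinuousSMul ℝ F]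
    [IsTopologicalAddGroup G] [ContinuousConstSMul ℝ G] (B : E →ₗ[ℝ] F →L[ℝ] G)
    (hB : Continuous fun p : E × F => B p.1 p.2)
    (hx : Tendsto (fun h : ℝ => h⁻¹ • (x (t + h) - x t)) (𝓝[≠] 0) (𝓝 x'))
    (hy : Tendsto (fun h : ℝ => h⁻¹ • (y (t + h) - y t)) (𝓝[≠] 0) (𝓝 y')) :
    Tendsto (fun h : ℝ => h⁻¹ • (B (x (t + h)) (y (t + h)) - B (x t) (y t))) (𝓝[≠] 0)
      (𝓝 (B x' (y t) + B (x t) y')) := by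
  have hleft : Tendsto (fun h : ℝ => B (h⁻¹ • (x (t + h) - x t)) (y (t + h))) (𝓝[≠] 0)
      (𝓝 (B x' (y t))) :=
    (hB.tendsto (x', y t)).comp (hx.prodMk_nhds (tendsto_comp_add_of_tendsto_slope hy))
  refine (hleft.add ((B (x t)).tendsto_slope_comp hy)).congr fun h => ?_
  simp only [map_smul, map_sub, smul_apply, sub_apply, smul_sub]
  abel

end Slope

namespace SchwartzMap

variable {D E F G : Type*} [NormedAddCommGroup D] [NormedSpace ℝ D]
  [NormedAddCommGroup E] [NormedSpace ℝ E] [NormedAddCommGroup F] [NormedSpace ℝ F]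
  [NormedAddCommGroup G] [NormedSpace ℝ G]

theorem seminorm_pairing_le (B : E →L[ℝ] F →L[ℝ] G) (k n : ℕ) (f : 𝓢(D, E)) (g : 𝓢(D, F)) :
    SchwartzMap.seminorm ℝ k n (pairing B f g) ≤
      ‖B‖ * ∑ i ∈ Finset.range (n + 1),
        n.choose i * (SchwartzMap.seminorm ℝ k i f * SchwartzMap.seminorm ℝ 0 (n - i) g) := by
  refine seminorm_le_bound ℝ k n _ (by positivity) fun x => ?_
  calc ‖x‖ ^ k * ‖iteratedFDeriv ℝ n (fun y => B (f y) (g y)) x‖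
      ≤ ‖x‖ ^ k * (‖B‖ * ∑ i ∈ Finset.range (n + 1),
          n.choose i * ‖iteratedFDeriv ℝ i f x‖ * ‖iteratedFDeriv ℝ (n - i) g x‖) := by
        gcongr
        exact B.norm_iteratedFDeriv_le_of_bilinear f.smooth' g.smooth' x (mod_cast le_top)
    _ = ‖B‖ * ∑ i ∈ Finset.range (n + 1),
          n.choose i * ((‖x‖ ^ k * ‖iteratedFDeriv ℝ i f x‖) *
            ‖iteratedFDeriv ℝ (n - i) g x‖) := by
        simp only [Finset.mul_sum]
        exact Finset.sum_congr rfl fun i _ => by ring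
    _ ≤ _ := by
        gcongr with i
        · exact le_seminorm ℝ k i f x
        · exact norm_iteratedFDeriv_le_seminorm ℝ g (n - i) x

theorem continuous_pairing (B : E →L[ℝ] F →L[ℝ] G) :
    Continuous fun p : 𝓢(D, E) × 𝓢(D, F) => pairing B p.1 p.2 := by
  refine continuous_of_continuousAt_zero₂
    (AddMonoidHom.mk' (fun f => (pairing B f).toLinearMap.toAddMonoidHom) fun f f' => by ext; simp :
      𝓢(D, E) →+ 𝓢(D, F) →+ 𝓢(D, G))
    ?_ (fun f => (pairing B f).continuous.continuousAt)
    (fun g => (pairing_continuous_left B g).continuousAt)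
  refine ((schwartz_withSeminorms ℝ D G).tendsto_nhds _ _).mpr fun ⟨k, n⟩ ε hε => ?_
  set bound : 𝓢(D, E) × 𝓢(D, F) → ℝ := fun p => ‖B‖ * ∑ i ∈ Finset.range (n + 1),
    n.choose i * (SchwartzMap.seminorm ℝ k i p.1 * SchwartzMap.seminorm ℝ 0 (n - i) p.2)
  have hbound : Continuous bound := by
    have hsem := (schwartz_withSeminorms ℝ D E).continuous_seminorm
    have hsem' := (schwartz_withSeminorms ℝ D F).continuous_seminorm
    exact continuous_const.mul (continuous_finsetSum _ fun i _ => continuous_const.mul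
      (((hsem (k, i)).comp continuous_fst).mul ((hsem' (0, n - i)).comp continuous_snd)))
  have h0 : bound 0 = 0 := by simp [bound]
  filter_upwards [hbound.continuousAt.eventually (gt_mem_nhds (h0 ▸ hε))] with p hp
  simpa using (seminorm_pairing_le B k n p.1 p.2).trans_lt hp

end SchwartzMap

def mulConjCLM : ℂ →L[ℝ] ℂ →L[ℝ] ℂ :=
  (ContinuousLinearMap.mul ℝ ℂ).bilinearComp (.id ℝ ℂ) conjCLE.toContinuousLinearMap

@[simp]
theorem mulConjCLM_apply (z w : ℂ) : mulConjCLM z w = z * conj w := rfl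

section FourierMultiplier

variable {V : Type*} [NormedAddCommGroup V] [InnerProductSpace ℝ V] [FiniteDimensional ℝ V]
  [MeasurableSpace V] [BorelSpace V] {m : V → ℝ}

theorem Real.fourier_conj (f : V → ℂ) (ξ : V) :
    𝓕 (fun x => conj (f x)) ξ = conj (𝓕 f (-ξ)) := by
  simp only [Real.fourier_eq', ← integral_conj, smul_eq_mul, map_mul, ← Complex.exp_conj,
    inner_neg_right, Complex.conj_ofReal, Complex.conj_I]
  congr 1 with x
  congr 2
  push_cast
  ring

theorem SchwartzMap.integral_fourierMultiplierCLM_mul (hm : m.HasTemperateGrowth)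
    (a b : 𝓢(V, ℂ)) :
    ∫ x, fourierMultiplierCLM ℂ m a x * b x = ∫ ξ, m ξ * 𝓕 a ξ * 𝓕 b (-ξ) := by
  rw [fourierMultiplierCLM_apply, integral_fourierInv_mul_eq]
  congr 1 with ξ
  simp [smulLeftCLM_apply_apply hm, fourierInv_coe, Real.fourierInv_eq_fourier_neg, fourier_coe]

theorem SchwartzMap.integral_fourierMultiplierCLM_mul_comm (hm : m.HasTemperateGrowth)
    (hm_even : ∀ ξ, m (-ξ) = m ξ) (a b : 𝓢(V, ℂ)) :
    ∫ x, fourierMultiplierCLM ℂ m a x * b x = ∫ x, fourierMultiplierCLM ℂ m b x * a x := by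
  rw [integral_fourierMultiplierCLM_mul hm, integral_fourierMultiplierCLM_mul hm,
    ← integral_neg_eq_self]
  congr 1 with ξ
  rw [hm_even, neg_neg]
  ring

theorem SchwartzMap.integral_fourierMultiplierCLM_mul_conj (hm : m.HasTemperateGrowth)
    (hm_even : ∀ ξ, m (-ξ) = m ξ) {a a' b b' : 𝓢(V, ℂ)} (ha : ∀ x, a' x = conj (a x))
    (hb : ∀ x, b' x = conj (b x)) :
    ∫ x, fourierMultiplierCLM ℂ m a' x * b' x =
      conj (∫ x, fourierMultiplierCLM ℂ m a x * b x) := by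
  have hfa : ∀ ξ, 𝓕 a' ξ = conj (𝓕 a (-ξ)) := fun ξ => by
    rw [fourier_coe, fourier_coe, ← Real.fourier_conj, funext ha]
  have hfb : ∀ ξ, 𝓕 b' ξ = conj (𝓕 b (-ξ)) := fun ξ => by
    rw [fourier_coe, fourier_coe, ← Real.fourier_conj, funext hb]
  rw [integral_fourierMultiplierCLM_mul hm, integral_fourierMultiplierCLM_mul hm,
    ← integral_conj, ← integral_neg_eq_self]
  congr 1 with ξ
  simp [hfa, hfb, hm_even]

theorem hasDerivAt_re_integral_fourierMultiplierCLM_mul (hm : m.HasTemperateGrowth)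
    (hm_even : ∀ ξ, m (-ξ) = m ξ) {v : ℝ → 𝓢(V, ℂ)} {t : ℝ} {v' : 𝓢(V, ℂ)}
    (hv : Tendsto (fun h : ℝ => h⁻¹ • (v (t + h) - v t)) (𝓝[≠] 0) (𝓝 v')) :
    HasDerivAt (fun s => (∫ x, fourierMultiplierCLM ℂ m (pairing mulConjCLM (v s) (v s)) x *
        pairing mulConjCLM (v s) (v s) x).re)
      (4 * (∫ x, fourierMultiplierCLM ℂ m (pairing mulConjCLM (v t) (v t)) x *
        pairing mulConjCLM (v t) v' x).re) t := by
  have hp := tendsto_slope_bilinear (pairing mulConjCLM) (continuous_pairing mulConjCLM) hv hv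
  have hBp := (fourierMultiplierCLM ℂ m).tendsto_slope_comp
    (x := fun s => pairing mulConjCLM (v s) (v s)) hp
  have hq := tendsto_slope_bilinear (pairing (ContinuousLinearMap.mul ℝ ℂ))
    (x := fun s => fourierMultiplierCLM ℂ m (pairing mulConjCLM (v s) (v s)))
    (y := fun s => pairing mulConjCLM (v s) (v s))
    (continuous_pairing (ContinuousLinearMap.mul ℝ ℂ)) hBp hp
  have hF := (reCLM ∘L integralCLM ℝ (volume : Measure V)).tendsto_slope_comp
    (x := fun s => pairing (ContinuousLinearMap.mul ℝ ℂ)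
      (fourierMultiplierCLM ℂ m (pairing mulConjCLM (v s) (v s))) (pairing mulConjCLM (v s) (v s)))
    hq
  rw [hasDerivAt_iff_tendsto_slope_zero]
  convert hF using 2
  · rfl
  set p := pairing mulConjCLM (v t) (v t)
  set w := pairing mulConjCLM (v t) v'
  have hp_real : ∀ x, p x = conj (p x) := fun x => by simp [p, mul_comm]
  have hw_conj : ∀ x, pairing mulConjCLM v' (v t) x = conj (w x) := fun x => by simp [w, mul_comm]
  have h1 := integral_fourierMultiplierCLM_mul_conj hm hm_even hw_conj hp_real
  have h2 := integral_fourierMultiplierCLM_mul_conj hm hm_even hp_real hw_conj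
  have h3 := integral_fourierMultiplierCLM_mul_comm hm hm_even w p
  have hL : ∀ a b : 𝓢(V, ℂ), (reCLM ∘L integralCLM ℝ (volume : Measure V))
      (pairing (ContinuousLinearMap.mul ℝ ℂ) a b) = (∫ x, a x * b x).re := fun _ _ => rfl
  simp only [map_add, add_apply, hL]
  rw [h1, h2, h3, Complex.conj_re]
  ring

end FourierMultiplier

def helmholtzSymbol {V : Type*} [NormedAddCommGroup V] (α : ℝ) (ξ : V) : ℝ :=
  (1 + α ^ 2 * ‖ξ‖ ^ 2)⁻¹

theorem hasTemperateGrowth_helmholtzSymbol {V : Type*} [NormedAddCommGroup V]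
    [InnerProductSpace ℝ V] (α : ℝ) : (helmholtzSymbol (V := V) α).HasTemperateGrowth := by
  have h : helmholtzSymbol (V := V) α =
      (fun x => (1 + ‖x‖ ^ 2) ^ (-1 : ℝ)) ∘ (α • ContinuousLinearMap.id ℝ V) := by
    ext ξ
    simp [helmholtzSymbol, norm_smul, mul_pow, Real.rpow_neg_one]
  rw [h]
  exact (Function.hasTemperateGrowth_one_add_norm_sq_rpow V (-1)).comp
    (α • ContinuousLinearMap.id ℝ V).hasTemperateGrowth

theorem helmholtzSymbol_neg {V : Type*} [NormedAddCommGroup V] (α : ℝ) (ξ : V) :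
    helmholtzSymbol α (-ξ) = helmholtzSymbol α ξ := by
  simp [helmholtzSymbol]

theorem mult_mB_eq_fourierMultiplierCLM (α : ℝ) (g : 𝓢(Plane, ℂ)) :
    mult (mB α) g = fourierMultiplierCLM ℂ (helmholtzSymbol α) g := by
  rw [fourierMultiplierCLM_apply, fourierInv_coe,
    smulLeftCLM_apply (hasTemperateGrowth_helmholtzSymbol α), mult]
  congr 1 with ξ

theorem ofReal_norm_sq_eq_pairing {V : Type*} [NormedAddCommGroup V] [NormedSpace ℝ V]
    (f : 𝓢(V, ℂ)) (x : V) : ((‖f x‖ ^ 2 : ℝ) : ℂ) = pairing mulConjCLM f f x := by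
  simp [Complex.mul_conj, Complex.normSq_eq_norm_sq]

theorem stmt9_general (α : ℝ) (I : Set ℝ)
    (v v' : ℝ → 𝓢(Plane, ℂ))
    (hderiv : ∀ t ∈ I,
      Tendsto (fun h : ℝ => h⁻¹ • (v (t + h) - v t)) (𝓝[≠] 0) (𝓝 (v' t))) :
    ∀ t ∈ I,
      HasDerivAt
        (fun s =>
          (∫ x, mult (mB α) (fun y => ((‖v s y‖ ^ 2 : ℝ) : ℂ)) x * ((‖v s x‖ ^ 2 : ℝ) : ℂ)).re)
        (4 * (∫ x, mult (mB α) (fun y => ((‖v t y‖ ^ 2 : ℝ) : ℂ)) x * v t x *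
          (starRingEnd ℂ) (v' t x)).re) t := by
  intro t ht
  have h := hasDerivAt_re_integral_fourierMultiplierCLM_mul (hasTemperateGrowth_helmholtzSymbol α)
    (helmholtzSymbol_neg α) (hderiv t ht)
  simp only [ofReal_norm_sq_eq_pairing, mult_mB_eq_fourierMultiplierCLM, mul_assoc]
  simpa only [pairing_apply_apply, mulConjCLM_apply] using h

theorem stmt9 (α : ℝ) (hα : 0 < α) (I : Set ℝ) (hIopen : IsOpen I) (hIconn : I.OrdConnected)
    (v v' : ℝ → 𝓢(Plane, ℂ))
    (hderiv : ∀ t ∈ I,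
      Tendsto (fun h : ℝ => h⁻¹ • (v (t + h) - v t)) (𝓝[≠] 0) (𝓝 (v' t)))
    (hcont : ContinuousOn v' I) :
    ∀ t ∈ I,
      HasDerivAt
        (fun s =>
          (∫ x, mult (mB α) (fun y => ((‖v s y‖ ^ 2 : ℝ) : ℂ)) x * ((‖v s x‖ ^ 2 : ℝ) : ℂ)).re)
        (4 * (∫ x, mult (mB α) (fun y => ((‖v t y‖ ^ 2 : ℝ) : ℂ)) x * v t x *
          (starRingEnd ℂ) (v' t x)).re) t :=
  stmt9_general α I v v' hderiv
end
end

section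
/- Let ν > 0 and let S, X : ℝ² → ℝ be Schwartz functions which are both symmetric under the coordinate exchange (ξ₁, ξ₂) ↦ (ξ₂, ξ₁), and which satisfy ∂²_{ξ₁}X + ν ∂²_{ξ₂}X = ∂²_{ξ₁}(S²) on ℝ². Then ∫_{ℝ²} S² ΔX dξ₁ dξ₂ = − (1/(1+ν)) ∫_{ℝ²} |∇(S²)|² dξ₁ dξ₂. -/
noncomputable section
open MeasureTheory SchwartzMap
open scoped ENNReal

/-- The partial derivative in the `i`-th coordinate direction. -/
def pdR (i : Fin 2) (f : Plane → ℝ) : Plane → ℝ :=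
  fun x => fderiv ℝ f x (EuclideanSpace.single i 1)

/-- The Laplacian `Δ = ∂²_{ξ₁} + ∂²_{ξ₂}`. -/
def lapR (f : Plane → ℝ) : Plane → ℝ :=
  fun x => pdR 0 (pdR 0 f) x + pdR 1 (pdR 1 f) x

/-- The coordinate exchange `(ξ₁, ξ₂) ↦ (ξ₂, ξ₁)` on `ℝ²`. -/
def swap12 : Plane → Plane :=
  fun x => (EuclideanSpace.equiv (Fin 2) ℝ).symm ![x 1, x 0]

/-! Evaluating the equation at `x` and at the swapped point and adding shows, by the symmetry,
that `(1 + ν) ΔX = Δ(S²)`. Hence `∫ S² ΔX = (1 + ν)⁻¹ ∫ S² Δ(S²)`, and one integration by parts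
in each coordinate, legitimate since `S²` is again a Schwartz function, turns `∫ S² Δ(S²)` into
`-∫ |∇(S²)|²`. -/

open LineDeriv

def swap12Equiv : Plane ≃L[ℝ] Plane :=
  (LinearIsometryEquiv.piLpCongrLeft 2 ℝ ℝ (Equiv.swap 0 1)).toContinuousLinearEquiv

lemma coe_swap12Equiv : ⇑swap12Equiv = swap12 := by
  funext x
  ext i
  fin_cases i <;> simp [swap12Equiv, swap12, Equiv.piCongrLeft']

lemma swap12Equiv_single (i : Fin 2) :
    swap12Equiv (EuclideanSpace.single i 1) = EuclideanSpace.single (Equiv.swap 0 1 i) 1 := by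
  simp [swap12Equiv]

lemma pdR_comp_swap12 (f : Plane → ℝ) (i : Fin 2) :
    pdR i (f ∘ swap12) = pdR (Equiv.swap 0 1 i) f ∘ swap12 := by
  funext x
  simp only [pdR, Function.comp_apply, ← coe_swap12Equiv]
  rw [swap12Equiv.comp_right_fderiv]
  simp [swap12Equiv_single]

lemma pdR_pdR_of_symm {f : Plane → ℝ} (hf : ∀ x, f (swap12 x) = f x) {i j : Fin 2}
    (hij : Equiv.swap 0 1 i = j) (x : Plane) :
    pdR i (pdR i f) x = pdR j (pdR j f) (swap12 x) := by
  have hf' : f ∘ swap12 = f := funext hf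
  conv_lhs => rw [← hf', pdR_comp_swap12, pdR_comp_swap12, hij]
  rfl

lemma one_add_mul_lapR_of_symm {ν : ℝ} {X Q : Plane → ℝ} (hX : ∀ x, X (swap12 x) = X x)
    (hQ : ∀ x, Q (swap12 x) = Q x)
    (hPDE : ∀ x, pdR 0 (pdR 0 X) x + ν * pdR 1 (pdR 1 X) x = pdR 0 (pdR 0 Q) x) (x : Plane) :
    (1 + ν) * lapR X x = lapR Q x := by
  have hswap := hPDE (swap12 x)
  rw [← pdR_pdR_of_symm hX (i := 1) (j := 0) rfl, ← pdR_pdR_of_symm hX (i := 0) (j := 1) rfl,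
    ← pdR_pdR_of_symm hQ (i := 1) (j := 0) rfl] at hswap
  simp only [lapR]
  linarith [hPDE x]

lemma SchwartzMap.integrable_mul {E : Type*} [NormedAddCommGroup E] [NormedSpace ℝ E]
    [MeasurableSpace E] [BorelSpace E] [SecondCountableTopology E] {μ : Measure E}
    [μ.HasTemperateGrowth] (f g : 𝓢(E, ℝ)) :
    Integrable (fun x => f x * g x) μ :=
  (pairing (ContinuousLinearMap.mul ℝ ℝ) f g).integrable

lemma pdR_eq_lineDerivOp (f : 𝓢(Plane, ℝ)) (i : Fin 2) :
    pdR i f = ⇑(∂_{EuclideanSpace.single i (1 : ℝ)} f : 𝓢(Plane, ℝ)) := by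
  funext x
  simp [pdR, lineDerivOp_apply_eq_fderiv]

lemma integral_mul_pdR_pdR_self (f : 𝓢(Plane, ℝ)) (i : Fin 2) :
    ∫ x, f x * pdR i (pdR i f) x = -∫ x, pdR i f x ^ 2 := by
  simp only [pdR_eq_lineDerivOp, integral_mul_lineDerivOp_right_eq_neg_left, sq]

lemma integral_mul_lapR_self (f : 𝓢(Plane, ℝ)) :
    ∫ x, f x * lapR f x = -∫ x, (pdR 0 f x ^ 2 + pdR 1 f x ^ 2) := by
  have hmul (i : Fin 2) : Integrable (fun x => f x * pdR i (pdR i f) x) := by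
    simpa only [pdR_eq_lineDerivOp] using SchwartzMap.integrable_mul _ _
  have hsq (i : Fin 2) : Integrable (fun x => pdR i f x ^ 2) := by
    simpa only [pdR_eq_lineDerivOp, sq] using SchwartzMap.integrable_mul _ _
  simp only [lapR, mul_add]
  rw [integral_add (hmul 0) (hmul 1), integral_add (hsq 0) (hsq 1),
    integral_mul_pdR_pdR_self, integral_mul_pdR_pdR_self, neg_add]

theorem stmt11 (ν : ℝ) (hν : 0 < ν) (S X : 𝓢(Plane, ℝ))
    (hSsym : ∀ x, S (swap12 x) = S x) (hXsym : ∀ x, X (swap12 x) = X x)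
    (hPDE : ∀ x, pdR 0 (pdR 0 ⇑X) x + ν * pdR 1 (pdR 1 ⇑X) x
      = pdR 0 (pdR 0 (fun y => S y ^ 2)) x) :
    ∫ x, S x ^ 2 * lapR ⇑X x =
      -(1 / (1 + ν)) *
        ∫ x, (pdR 0 (fun y => S y ^ 2) x ^ 2 + pdR 1 (fun y => S y ^ 2) x ^ 2) := by
  set Q : 𝓢(Plane, ℝ) := pairing (ContinuousLinearMap.mul ℝ ℝ) S S
  have hQ (y : Plane) : S y ^ 2 = Q y := sq (S y)
  have hQsym (x : Plane) : Q (swap12 x) = Q x := by simp [Q, hSsym]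
  simp only [hQ] at hPDE ⊢
  have hlap (x : Plane) : lapR X x = (1 + ν)⁻¹ * lapR Q x := by
    rw [← one_add_mul_lapR_of_symm hXsym hQsym hPDE x, inv_mul_cancel_left₀ (by positivity)]
  calc ∫ x, Q x * lapR X x
      = (1 + ν)⁻¹ * ∫ x, Q x * lapR Q x := by
        simp only [hlap, mul_left_comm _ (1 + ν)⁻¹, integral_const_mul]
    _ = _ := by rw [integral_mul_lapR_self, one_div]; ring
end
end
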